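/- arXiv:1106.4811 — 2 statements merged into one kernel-verified Lean document; each statement's English description precedes it below -/
import Mathlib

section
/- Let Ω ⊆ ℝⁿ, let Q(x) be a real n×n matrix-valued function on Ω which is symmetric and positive semidefinite for almost every x ∈ Ω, and let T(x) = (t₁(x),…,tₙ(x)) be a vector field on Ω which is subunit with respect to Q(x), i.e., (Σᵢ tᵢ(x)ξᵢ)² ≤ ⟨Q(x)ξ,ξ⟩ for almost every x ∈ Ω and all ξ ∈ ℝⁿ. Then there exists a vector-valued function V(x) on Ω such that for almost every x ∈ Ω: (1) T(x) = √(Q(x))·V(x), and (2) |V(x)| ≤ 1. -/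
/-!
Pointwise this is linear algebra for the symmetric matrix `S = √Q`. Subunitarity says
`|⟨T, ξ⟩| ≤ |S ξ|`, so `T` is orthogonal to `ker S = (range S)ᗮ`, i.e. `T ∈ range S`. Taking the
preimage inside `range S`, say `v = S u`, gives `|v|² = ⟨S v, u⟩ = ⟨T, u⟩ ≤ |S u| = |v|`, hence
`|v| ≤ 1`. The field `V` is a choice of such a `v` at every point.
-/

open Matrix MeasureTheory
open scoped InnerProductSpace

/-- The Euclidean norm of a vector in `ℝⁿ`, written via the dot product. -/
noncomputable def euclNorm {n : ℕ} (x : Fin n → ℝ) : ℝ := Real.sqrt (x ⬝ᵥ x)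

/-- The square root of a positive semidefinite matrix, as `Matrix.PosSemidef.sqrt` was defined
in the older Mathlib (removed since). -/
noncomputable def Matrix.PosSemidef.sqrt {m : Type*} [Fintype m]
    [DecidableEq m] {A : Matrix m m ℝ} (hA : A.PosSemidef) : Matrix m m ℝ :=
  hA.1.eigenvectorUnitary.1 * diagonal (Real.sqrt ∘ hA.1.eigenvalues) *
    (star hA.1.eigenvectorUnitary : Matrix m m ℝ)

namespace LinearMap.IsSymmetric

variable {𝕜 E : Type*} [RCLike 𝕜] [NormedAddCommGroup E] [InnerProductSpace 𝕜 E]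
  [FiniteDimensional 𝕜 E] {A : E →ₗ[𝕜] E}

theorem orthogonal_ker (hA : A.IsSymmetric) : (ker A)ᗮ = range A := by
  rw [← hA.orthogonal_range, Submodule.orthogonal_orthogonal]

theorem exists_mem_range_apply_eq (hA : A.IsSymmetric) {t : E} (ht : t ∈ range A) :
    ∃ y ∈ range A, A y = t := by
  obtain ⟨w, rfl⟩ := ht
  obtain ⟨y, hy, z, hz, rfl⟩ := (range A).exists_add_mem_mem_orthogonal w
  rw [hA.orthogonal_range] at hz
  exact ⟨y, hy, by rw [map_add, LinearMap.mem_ker.mp hz, add_zero]⟩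

theorem exists_apply_eq_norm_le_one (hA : A.IsSymmetric) {t : E}
    (ht : ∀ ξ, ‖⟪t, ξ⟫_𝕜‖ ≤ ‖A ξ‖) : ∃ v, A v = t ∧ ‖v‖ ≤ 1 := by
  have ht_range : t ∈ range A := by
    rw [← hA.orthogonal_ker]
    intro u hu
    simpa [LinearMap.mem_ker.mp hu, inner_eq_zero_symm] using ht u
  obtain ⟨v, ⟨u, rfl⟩, hv⟩ := hA.exists_mem_range_apply_eq ht_range
  refine ⟨A u, hv, ?_⟩
  have hsq : ‖A u‖ ^ 2 ≤ ‖A u‖ := calc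
    ‖A u‖ ^ 2 = RCLike.re ⟪t, u⟫_𝕜 := by rw [← hv, hA, ← inner_self_eq_norm_sq (𝕜 := 𝕜)]
    _ ≤ ‖⟪t, u⟫_𝕜‖ := RCLike.re_le_norm _
    _ ≤ ‖A u‖ := ht u
  nlinarith [norm_nonneg (A u)]

end LinearMap.IsSymmetric

theorem norm_eq_euclNorm {n : ℕ} (x : EuclideanSpace ℝ (Fin n)) : ‖x‖ = euclNorm x.ofLp := by
  rw [norm_eq_sqrt_real_inner, euclNorm, EuclideanSpace.inner_eq_star_dotProduct, star_trivial]

namespace Matrix.PosSemidef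

variable {m : Type*} [Fintype m] [DecidableEq m] {A : Matrix m m ℝ}

theorem isHermitian_sqrt (hA : A.PosSemidef) : hA.sqrt.IsHermitian := by
  simpa [sqrt, star_eq_conjTranspose] using
    isHermitian_mul_mul_conjTranspose hA.1.eigenvectorUnitary.1 (isHermitian_diagonal _)

theorem sqrt_mul_sqrt (hA : A.PosSemidef) : hA.sqrt * hA.sqrt = A := by
  set U : Matrix m m ℝ := hA.1.eigenvectorUnitary.1
  set D := diagonal (Real.sqrt ∘ hA.1.eigenvalues)
  have hUU : star U * U = 1 := Unitary.coe_star_mul_self _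
  have hDD : D * D = diagonal (RCLike.ofReal ∘ hA.1.eigenvalues) := by
    rw [diagonal_mul_diagonal]
    congr 1
    funext i
    simp [Real.mul_self_sqrt (hA.eigenvalues_nonneg i)]
  calc hA.sqrt * hA.sqrt = U * D * (star U * U) * D * star U := by
        simp only [sqrt, Matrix.mul_assoc]; rfl
    _ = U * (D * D) * star U := by rw [hUU, Matrix.mul_one, Matrix.mul_assoc U D D]
    _ = A := by
        rw [hDD]
        conv_rhs => rw [hA.1.spectral_theorem, Unitary.conjStarAlgAut_apply]

theorem sqrt_mulVec_dotProduct_self (hA : A.PosSemidef) (ξ : m → ℝ) :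
    hA.sqrt *ᵥ ξ ⬝ᵥ hA.sqrt *ᵥ ξ = A *ᵥ ξ ⬝ᵥ ξ := by
  rw [dotProduct_mulVec, ← mulVec_transpose, ← conjTranspose_eq_transpose_of_trivial,
    hA.isHermitian_sqrt.eq, mulVec_mulVec, hA.sqrt_mul_sqrt, dotProduct_comm]

theorem exists_eq_sqrt_mulVec_of_subunit {n : ℕ}
    {Q : Matrix (Fin n) (Fin n) ℝ} (hQ : Q.PosSemidef) {t : Fin n → ℝ}
    (ht : ∀ ξ, (t ⬝ᵥ ξ) ^ 2 ≤ Q *ᵥ ξ ⬝ᵥ ξ) : ∃ v, t = hQ.sqrt *ᵥ v ∧ euclNorm v ≤ 1 := by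
  have hA : (toEuclideanLin hQ.sqrt).IsSymmetric :=
    isSymmetric_toEuclideanLin_iff.mpr hQ.isHermitian_sqrt
  have ht' (ξ : EuclideanSpace ℝ (Fin n)) :
      ‖⟪WithLp.toLp 2 t, ξ⟫_ℝ‖ ≤ ‖toEuclideanLin hQ.sqrt ξ‖ := by
    rw [norm_eq_euclNorm, ofLp_toLpLin, toLin'_apply, euclNorm, hQ.sqrt_mulVec_dotProduct_self,
      Real.norm_eq_abs, EuclideanSpace.inner_eq_star_dotProduct, star_trivial, dotProduct_comm]
    exact Real.abs_le_sqrt (ht ξ.ofLp)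
  obtain ⟨v, hv, hv_le⟩ := hA.exists_apply_eq_norm_le_one ht'
  refine ⟨v.ofLp, ?_, norm_eq_euclNorm v ▸ hv_le⟩
  rw [← toLin'_apply, ← ofLp_toLpLin, hv]

end Matrix.PosSemidef

theorem stmt10_general {n : ℕ} (Ω : Set (Fin n → ℝ))
    (Q : (Fin n → ℝ) → Matrix (Fin n) (Fin n) ℝ) (T : (Fin n → ℝ) → (Fin n → ℝ))
    (hae : ∀ᵐ x ∂(volume.restrict Ω),
      (Q x).PosSemidef ∧ ∀ ξ : Fin n → ℝ, (T x ⬝ᵥ ξ) ^ 2 ≤ (Q x).mulVec ξ ⬝ᵥ ξ) :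
    ∃ V : (Fin n → ℝ) → (Fin n → ℝ),
      ∀ᵐ x ∂(volume.restrict Ω), ∀ hQx : (Q x).PosSemidef,
        T x = hQx.sqrt.mulVec (V x) ∧ euclNorm (V x) ≤ 1 := by
  have hV (x) : ∃ v, ∀ hx : (Q x).PosSemidef ∧ ∀ ξ, (T x ⬝ᵥ ξ) ^ 2 ≤ (Q x).mulVec ξ ⬝ᵥ ξ,
      T x = hx.1.sqrt.mulVec v ∧ euclNorm v ≤ 1 := by
    by_cases hx : (Q x).PosSemidef ∧ ∀ ξ, (T x ⬝ᵥ ξ) ^ 2 ≤ (Q x).mulVec ξ ⬝ᵥ ξ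
    · obtain ⟨v, hv⟩ := hx.1.exists_eq_sqrt_mulVec_of_subunit hx.2
      exact ⟨v, fun _ => hv⟩
    · exact ⟨0, fun h => absurd h hx⟩
  choose V hV using hV
  exact ⟨V, by filter_upwards [hae] with x hx _ using hV x hx⟩

/-- If `Q x` is symmetric positive semidefinite for a.e. `x ∈ Ω` and the
vector field `T` is subunit with respect to `Q`, i.e. `(T(x)·ξ)² ≤ ⟨Q(x)ξ,ξ⟩` for a.e. `x`
and all `ξ`, then there is a vector-valued function `V` with `T(x) = √(Q(x))·V(x)` and
`|V(x)| ≤ 1` for a.e. `x ∈ Ω`. -/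
theorem stmt10 {n : ℕ} (Ω : Set (Fin n → ℝ)) (hΩ : MeasurableSet Ω)
    (Q : (Fin n → ℝ) → Matrix (Fin n) (Fin n) ℝ) (T : (Fin n → ℝ) → (Fin n → ℝ))
    (hae : ∀ᵐ x ∂(volume.restrict Ω),
      (Q x).PosSemidef ∧ ∀ ξ : Fin n → ℝ, (T x ⬝ᵥ ξ) ^ 2 ≤ (Q x).mulVec ξ ⬝ᵥ ξ) :
    ∃ V : (Fin n → ℝ) → (Fin n → ℝ),
      ∀ᵐ x ∂(volume.restrict Ω), ∀ hQx : (Q x).PosSemidef,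
        T x = hQx.sqrt.mulVec (V x) ∧ euclNorm (V x) ≤ 1 :=
  stmt10_general Ω Q T hae
end

section
/- Let Ω ⊆ ℝⁿ be open, 1 < p < ∞, σ > 1, and let Q : Ω → ℝ^{n×n} be a measurable matrix-valued function with Q(x) symmetric and positive semidefinite for almost every x ∈ Ω. Let B ⊆ Ω be a bounded measurable set with |B| > 0, let S ⊆ B, and let r > 0. Assume: (i) there is C₁ > 0 such that for every Lipschitz function v : ℝⁿ → ℝ with compact support contained in B, ((1/|B|)∫_B |v|^{pσ} dx)^{1/(pσ)} ≤ C₁ [ r((1/|B|)∫_B |√(Q(x))·∇v(x)|^p dx)^{1/p} + ((1/|B|)∫_B |v|^p dx)^{1/p} ]; (ii) there exist t ∈ (1,∞) and a Lipschitz function η with compact support contained in B such that 0 ≤ η ≤ 1, η = 1 on S, and ∫_B |√(Q(x))·∇η(x)|^{pt} dx < ∞; (iii) with t′ = t/(t−1), there is c₂ > 0 such that for every locally Lipschitz f : Ω → ℝ, (∫_B |f|^{pt′} dx)^{1/(pt′)} ≤ c₂ (∫_Ω |√(Q(x))·∇f(x)|^p dx + ∫_Ω |f|^p dx)^{1/p}.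 Then there exists a constant C > 0, independent of w, such that every locally Lipschitz function w : Ω → ℝ satisfies (∫_S |w|^{pσ} dx)^{1/(pσ)} ≤ C (∫_Ω |√(Q(x))·∇w(x)|^p dx + ∫_Ω |w|^p dx)^{1/p}. -/
/-!
The Sobolev inequality (i) is applied to the cutoff product `v = η w`, which is Lipschitz with
compact support in `B` and coincides with `w` on `S`. By the Leibniz rule,
`|√Q ∇v| ≤ |√Q ∇w| + |w| |√Q ∇η|` almost everywhere, and Hölder's inequality with the exponents
`t'`, `t` bounds `∫_B |w|^p |√Q ∇η|^p` by `‖w‖_{L^{pt'}(B)}^p ‖√Q ∇η‖_{L^{pt}(B)}^p`, which (iii)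
and (ii) control by the `W^{1,p}_Q(Ω)`-norm of `w`.
-/

open Matrix MeasureTheory

/-- The (a.e.-defined) gradient of `v : ℝⁿ → ℝ`, given by the directional derivatives of `v`
along the standard basis vectors (Lipschitz functions are differentiable a.e. by
Rademacher's theorem; `fderiv` is `0` where `v` is not differentiable). -/
noncomputable def grad {n : ℕ} (v : (Fin n → ℝ) → ℝ) (x : Fin n → ℝ) : Fin n → ℝ :=
  fun i => fderiv ℝ v x (Pi.single i 1)

/-- `|√(Q(x))·∇v(x)| = ⟨Q(x)∇v(x), ∇v(x)⟩^{1/2}`, the degenerate length of the gradient. -/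
noncomputable def sqQnormGrad {n : ℕ} (Q : (Fin n → ℝ) → Matrix (Fin n) (Fin n) ℝ)
    (v : (Fin n → ℝ) → ℝ) (x : Fin n → ℝ) : ℝ :=
  Real.sqrt ((Q x).mulVec (grad v x) ⬝ᵥ grad v x)

/-- `f` is locally Lipschitz on `Ω`. -/
def LocLipschitzOn {n : ℕ} (Ω : Set (Fin n → ℝ)) (f : (Fin n → ℝ) → ℝ) : Prop :=
  ∀ x ∈ Ω, ∃ K : NNReal, ∃ s ∈ nhdsWithin x Ω, LipschitzOnWith K f s

open scoped ENNReal NNReal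

lemma lipschitzWith_mul_of_lipschitzOnWith {α : Type*} [PseudoMetricSpace α] {η w : α → ℝ}
    {s : Set α} {Kη Kw M : ℝ≥0} (hη : LipschitzWith Kη η) (hη1 : ∀ x, |η x| ≤ 1)
    (hηs : Function.support η ⊆ s) (hw : LipschitzOnWith Kw w s) (hM : ∀ x ∈ s, |w x| ≤ M) :
    LipschitzWith (Kw + M * Kη) fun x => η x * w x := by
  have hη0 : ∀ x ∉ s, η x = 0 := fun x hx => Function.notMem_support.1 (mt (@hηs x) hx)
  have hmem : ∀ x ∈ s, ∀ y, dist (η x * w x) (η y * w y) ≤ (Kw + M * Kη) * dist x y := by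
    intro x hx y
    by_cases hy : y ∈ s
    · calc dist (η x * w x) (η y * w y) = |η x * (w x - w y) + w y * (η x - η y)| := by
            rw [Real.dist_eq]; ring_nf
        _ ≤ 1 * (Kw * dist x y) + M * (Kη * dist x y) := by
            refine (abs_add_le _ _).trans ?_
            rw [abs_mul, abs_mul, ← Real.dist_eq, ← Real.dist_eq]
            gcongr
            exacts [hη1 x, hw.dist_le_mul x hx y hy, hM y hy, hη.dist_le_mul x y]
        _ = (Kw + M * Kη) * dist x y := by ring
    · calc dist (η x * w x) (η y * w y) = |η x - η y| * |w x| := by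
            rw [Real.dist_eq, hη0 y hy, zero_mul, sub_zero, sub_zero, abs_mul]
        _ ≤ (Kη * dist x y) * M := by
            rw [← Real.dist_eq]
            gcongr
            exacts [hη.dist_le_mul x y, hM x hx]
        _ ≤ (Kw + M * Kη) * dist x y := by
            nlinarith [dist_nonneg (x := x) (y := y), Kw.coe_nonneg]
  refine LipschitzWith.of_dist_le_mul fun x y => ?_
  push_cast
  by_cases hx : x ∈ s
  · exact hmem x hx y
  by_cases hy : y ∈ s
  · simpa only [dist_comm] using hmem y hy x
  simp only [hη0 x hx, hη0 y hy, zero_mul, dist_self]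
  positivity

lemma LocallyLipschitzOn.exists_lipschitzWith_mul {α : Type*} [PseudoMetricSpace α]
    {η w : α → ℝ} {Kη : ℝ≥0} (hη : LipschitzWith Kη η) (hη1 : ∀ x, |η x| ≤ 1)
    (hηc : HasCompactSupport η) (hw : LocallyLipschitzOn (tsupport η) w) :
    ∃ K, LipschitzWith K fun x => η x * w x := by
  obtain ⟨Kw, hKw⟩ := hw.exists_lipschitzOnWith_of_compact hηc
  obtain ⟨M, hM⟩ := hηc.exists_bound_of_continuousOn hw.continuousOn
  exact ⟨_, lipschitzWith_mul_of_lipschitzOnWith (M := M.toNNReal) hη hη1 (subset_tsupport η) hKw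
    fun x hx => (hM x hx).trans (Real.le_coe_toNNReal M)⟩

lemma LocallyLipschitzOn.ae_differentiableAt {E F : Type*} [NormedAddCommGroup E]
    [NormedSpace ℝ E] [FiniteDimensional ℝ E] [MeasurableSpace E] [BorelSpace E]
    [NormedAddCommGroup F] [NormedSpace ℝ F] [FiniteDimensional ℝ F]
    {μ : Measure E} [μ.IsAddHaarMeasure] {f : E → F} {s : Set E} (hs : IsOpen s)
    (hf : LocallyLipschitzOn s f) : ∀ᵐ x ∂μ.restrict s, DifferentiableAt ℝ f x := by
  rw [ae_restrict_iff' hs.measurableSet, ae_iff]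
  refine measure_null_of_locally_null _ fun x hx => ?_
  obtain ⟨hxs, -⟩ := Classical.not_imp.1 hx
  obtain ⟨K, t, ht, hK⟩ := hf hxs
  rw [hs.nhdsWithin_eq hxs] at ht
  obtain ⟨u, hut, hu, hxu⟩ := mem_nhds_iff.1 ht
  refine ⟨_, inter_mem_nhdsWithin _ (hu.mem_nhds hxu), measure_mono_null ?_
    (ae_iff.1 ((hK.mono hut).ae_differentiableWithinAt_of_mem (μ := μ)))⟩
  rintro y ⟨hy, hyu⟩ hd
  exact hy fun _ => (hd hyu).differentiableAt (hu.mem_nhds hyu)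

lemma grad_mul {n : ℕ} {η w : (Fin n → ℝ) → ℝ} {x : Fin n → ℝ}
    (hη : DifferentiableAt ℝ η x) (hw : DifferentiableAt ℝ w x) :
    grad (fun y => η y * w y) x = η x • grad w x + w x • grad η x := by
  funext i
  simp [grad, fderiv_fun_mul hη hw]

lemma measurable_sqQnormGrad {n : ℕ} {Q : (Fin n → ℝ) → Matrix (Fin n) (Fin n) ℝ}
    (hQ : ∀ i j, Measurable fun x => Q x i j) (f : (Fin n → ℝ) → ℝ) :
    Measurable (sqQnormGrad Q f) := by
  have hgrad : ∀ i, Measurable fun x => grad f x i := fun i =>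
    measurable_fderiv_apply_const ℝ f (Pi.single i 1)
  refine Real.continuous_sqrt.measurable.comp ?_
  simp only [dotProduct, mulVec]
  fun_prop

open scoped MatrixOrder in
lemma Matrix.PosSemidef.sqrt_dotProduct_mulVec_eq_norm {ι : Type*} [Fintype ι] [DecidableEq ι]
    {Q : Matrix ι ι ℝ} (hQ : Q.PosSemidef) (u : ι → ℝ) :
    √(Q *ᵥ u ⬝ᵥ u) = ‖WithLp.toLp 2 (CFC.sqrt Q *ᵥ u)‖ := by
  have hsymm : (CFC.sqrt Q)ᵀ = CFC.sqrt Q := (CFC.sqrt_nonneg Q).posSemidef.1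
  have hQ_sq : Q *ᵥ u ⬝ᵥ u = CFC.sqrt Q *ᵥ u ⬝ᵥ CFC.sqrt Q *ᵥ u := by
    rw [dotProduct_mulVec, ← mulVec_transpose, hsymm, mulVec_mulVec,
      CFC.sqrt_mul_sqrt_self Q hQ.nonneg]
  rw [hQ_sq, EuclideanSpace.norm_eq]
  simp [dotProduct, sq]

lemma sqQnormGrad_mul_le {n : ℕ} {Q : (Fin n → ℝ) → Matrix (Fin n) (Fin n) ℝ}
    {η w : (Fin n → ℝ) → ℝ} {x : Fin n → ℝ} (hQ : (Q x).PosSemidef)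
    (hη : DifferentiableAt ℝ η x) (hw : DifferentiableAt ℝ w x) :
    sqQnormGrad Q (fun y => η y * w y) x ≤
      |η x| * sqQnormGrad Q w x + |w x| * sqQnormGrad Q η x := by
  simp only [sqQnormGrad, hQ.sqrt_dotProduct_mulVec_eq_norm]
  rw [grad_mul hη hw, mulVec_add, mulVec_smul, mulVec_smul, WithLp.toLp_add, WithLp.toLp_smul,
    WithLp.toLp_smul]
  exact (norm_add_le _ _).trans_eq (by simp only [norm_smul, Real.norm_eq_abs])

lemma sqQnormGrad_nonneg {n : ℕ} (Q : (Fin n → ℝ) → Matrix (Fin n) (Fin n) ℝ)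
    (f : (Fin n → ℝ) → ℝ) (x : Fin n → ℝ) : 0 ≤ sqQnormGrad Q f x :=
  Real.sqrt_nonneg _

lemma ofReal_sqQnormGrad_mul_rpow_le {n : ℕ} {Q : (Fin n → ℝ) → Matrix (Fin n) (Fin n) ℝ}
    {η w : (Fin n → ℝ) → ℝ} {x : Fin n → ℝ} (hQ : (Q x).PosSemidef)
    (hη : DifferentiableAt ℝ η x) (hw : DifferentiableAt ℝ w x) (hη1 : |η x| ≤ 1) {p : ℝ}
    (hp : 1 ≤ p) :
    ENNReal.ofReal (sqQnormGrad Q (fun y => η y * w y) x ^ p) ≤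
      2 ^ (p - 1) * (ENNReal.ofReal (sqQnormGrad Q w x ^ p) +
        ENNReal.ofReal ((|w x| * sqQnormGrad Q η x) ^ p)) := by
  have hp0 : 0 ≤ p := by linarith
  have hNw := sqQnormGrad_nonneg Q w x
  have hNη := sqQnormGrad_nonneg Q η x
  have hle : sqQnormGrad Q (fun y => η y * w y) x ≤
      sqQnormGrad Q w x + |w x| * sqQnormGrad Q η x :=
    (sqQnormGrad_mul_le hQ hη hw).trans (by nlinarith)
  rw [← ENNReal.ofReal_rpow_of_nonneg (sqQnormGrad_nonneg Q _ x) hp0,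
    ← ENNReal.ofReal_rpow_of_nonneg hNw hp0, ← ENNReal.ofReal_rpow_of_nonneg (by positivity) hp0]
  calc ENNReal.ofReal (sqQnormGrad Q (fun y => η y * w y) x) ^ p
      ≤ (ENNReal.ofReal (sqQnormGrad Q w x) +
          ENNReal.ofReal (|w x| * sqQnormGrad Q η x)) ^ p := by
        rw [← ENNReal.ofReal_add hNw (by positivity)]
        gcongr
    _ ≤ _ := ENNReal.rpow_add_le_mul_rpow_add_rpow _ _ hp

lemma lintegral_ofReal_mul_rpow_le {α : Type*} [MeasurableSpace α] {μ : Measure α}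
    {f g : α → ℝ} (hf : AEMeasurable f μ) (hg : AEMeasurable g μ) (hf0 : ∀ x, 0 ≤ f x)
    (hg0 : ∀ x, 0 ≤ g x) {p s t : ℝ} (hst : s.HolderConjugate t) :
    ∫⁻ x, ENNReal.ofReal ((f x * g x) ^ p) ∂μ ≤
      (∫⁻ x, ENNReal.ofReal (f x ^ (p * s)) ∂μ) ^ (1 / s) *
        (∫⁻ x, ENNReal.ofReal (g x ^ (p * t)) ∂μ) ^ (1 / t) := by
  have hpow : ∀ {h : α → ℝ}, (∀ x, 0 ≤ h x) → ∀ {q : ℝ}, 0 ≤ q → ∀ x,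
      ENNReal.ofReal (h x ^ (p * q)) = ENNReal.ofReal (h x ^ p) ^ q := fun h0 _ hq x => by
    rw [ENNReal.ofReal_rpow_of_nonneg (Real.rpow_nonneg (h0 x) p) hq, Real.rpow_mul (h0 x)]
  simp only [hpow hf0 hst.nonneg, hpow hg0 hst.symm.nonneg, Real.mul_rpow (hf0 _) (hg0 _),
    ENNReal.ofReal_mul (Real.rpow_nonneg (hf0 _) p)]
  exact ENNReal.lintegral_mul_le_Lp_mul_Lq μ hst (by fun_prop) (by fun_prop)

lemma ENNReal.rpow_one_div_le_of_rpow_one_div_mul_le {a c X : ℝ≥0∞} {p s : ℝ} (hp : 0 < p)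
    (h : a ^ (1 / (p * s)) ≤ c * X ^ (1 / p)) : a ^ (1 / s) ≤ c ^ p * X := by
  have hs : 1 / s = 1 / (p * s) * p := by field_simp
  calc a ^ (1 / s) = (a ^ (1 / (p * s))) ^ p := by rw [hs, ENNReal.rpow_mul]
    _ ≤ (c * X ^ (1 / p)) ^ p := by gcongr
    _ = c ^ p * X := by
      rw [ENNReal.mul_rpow_of_nonneg _ _ hp.le, ← ENNReal.rpow_mul, one_div_mul_cancel hp.ne',
        ENNReal.rpow_one]

lemma ENNReal.rpow_le_of_normalized_le {m a G L X A c r : ℝ≥0∞} {s q : ℝ} (hs : 0 ≤ s)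
    (hq : 0 ≤ q) (hm0 : m ≠ 0) (hm : m ≠ ∞)
    (h : (m⁻¹ * a) ^ s ≤ c * (r * (m⁻¹ * G) ^ q + (m⁻¹ * L) ^ q)) (hG : G ≤ A * X)
    (hL : L ≤ X) : a ^ s ≤ m ^ s * (c * (r * (m⁻¹ * A) ^ q + m⁻¹ ^ q)) * X ^ q := by
  calc a ^ s = m ^ s * (m⁻¹ * a) ^ s := by
        rw [← ENNReal.mul_rpow_of_nonneg _ _ hs, ← mul_assoc, ENNReal.mul_inv_cancel hm0 hm,
          one_mul]
    _ ≤ m ^ s * (c * (r * (m⁻¹ * (A * X)) ^ q + (m⁻¹ * X) ^ q)) :=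
      mul_le_mul_right (h.trans (by gcongr)) _
    _ = m ^ s * (c * (r * (m⁻¹ * A) ^ q + m⁻¹ ^ q)) * X ^ q := by
      rw [← mul_assoc m⁻¹, ENNReal.mul_rpow_of_nonneg _ _ hq, ENNReal.mul_rpow_of_nonneg _ X hq]
      ring

lemma lintegral_sqQnormGrad_mul_rpow_le {n : ℕ} {μ : Measure (Fin n → ℝ)}
    {Q : (Fin n → ℝ) → Matrix (Fin n) (Fin n) ℝ} (hQmeas : ∀ i j, Measurable fun x => Q x i j)
    (hQ : ∀ᵐ x ∂μ, (Q x).PosSemidef) {η w : (Fin n → ℝ) → ℝ}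
    (hη : ∀ᵐ x ∂μ, DifferentiableAt ℝ η x) (hw : ∀ᵐ x ∂μ, DifferentiableAt ℝ w x)
    (hwm : AEMeasurable w μ) (hη1 : ∀ x, |η x| ≤ 1) {p s t : ℝ} (hp : 1 ≤ p)
    (hst : s.HolderConjugate t) {c X : ℝ≥0∞}
    (hX : ∫⁻ x, ENNReal.ofReal (sqQnormGrad Q w x ^ p) ∂μ ≤ X)
    (hemb : (∫⁻ x, ENNReal.ofReal (|w x| ^ (p * s)) ∂μ) ^ (1 / (p * s)) ≤ c * X ^ (1 / p)) :
    ∫⁻ x, ENNReal.ofReal (sqQnormGrad Q (fun y => η y * w y) x ^ p) ∂μ ≤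
      2 ^ (p - 1) *
        (1 + c ^ p * (∫⁻ x, ENNReal.ofReal (sqQnormGrad Q η x ^ (p * t)) ∂μ) ^ (1 / t)) * X := by
  have hN := measurable_sqQnormGrad hQmeas
  have hp0 : 0 < p := by linarith
  calc ∫⁻ x, ENNReal.ofReal (sqQnormGrad Q (fun y => η y * w y) x ^ p) ∂μ
      ≤ ∫⁻ x, 2 ^ (p - 1) * (ENNReal.ofReal (sqQnormGrad Q w x ^ p) +
          ENNReal.ofReal ((|w x| * sqQnormGrad Q η x) ^ p)) ∂μ :=
      lintegral_mono_ae <| by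
        filter_upwards [hQ, hη, hw] with x hQx hηx hwx
          using ofReal_sqQnormGrad_mul_rpow_le hQx hηx hwx (hη1 x) hp
    _ = 2 ^ (p - 1) * (∫⁻ x, ENNReal.ofReal (sqQnormGrad Q w x ^ p) ∂μ +
          ∫⁻ x, ENNReal.ofReal ((|w x| * sqQnormGrad Q η x) ^ p) ∂μ) := by
      rw [lintegral_const_mul' _ _ (by simp), lintegral_add_left (by fun_prop)]
    _ ≤ 2 ^ (p - 1) * (X + (∫⁻ x, ENNReal.ofReal (|w x| ^ (p * s)) ∂μ) ^ (1 / s) *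
          (∫⁻ x, ENNReal.ofReal (sqQnormGrad Q η x ^ (p * t)) ∂μ) ^ (1 / t)) := by
      gcongr
      exact lintegral_ofReal_mul_rpow_le (by fun_prop) (hN η).aemeasurable
        (fun _ => abs_nonneg _) (sqQnormGrad_nonneg Q η) hst
    _ ≤ 2 ^ (p - 1) * (X + c ^ p * X *
          (∫⁻ x, ENNReal.ofReal (sqQnormGrad Q η x ^ (p * t)) ∂μ) ^ (1 / t)) := by
      gcongr
      exact ENNReal.rpow_one_div_le_of_rpow_one_div_mul_le hp0 hemb
    _ = _ := by ring

lemma lintegral_ofReal_abs_mul_rpow_le {α : Type*} [MeasurableSpace α] {μ : Measure α}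
    {η w : α → ℝ} (hη1 : ∀ x, |η x| ≤ 1) {p : ℝ} (hp : 0 ≤ p) :
    ∫⁻ x, ENNReal.ofReal (|η x * w x| ^ p) ∂μ ≤ ∫⁻ x, ENNReal.ofReal (|w x| ^ p) ∂μ := by
  refine lintegral_mono fun x => ENNReal.ofReal_le_ofReal (Real.rpow_le_rpow (abs_nonneg _) ?_ hp)
  rw [abs_mul]
  exact mul_le_of_le_one_left (abs_nonneg _) (hη1 x)

lemma setLIntegral_le_setLIntegral_mul_of_eq_one {α : Type*} [TopologicalSpace α]
    [MeasurableSpace α] [OpensMeasurableSpace α] {μ : Measure α} {η w : α → ℝ}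
    (hη : Continuous η) {S B : Set α} (hηS : ∀ x ∈ S, η x = 1) (hηB : Function.support η ⊆ B)
    {q : ℝ} (hq : q ≠ 0) :
    ∫⁻ x in S, ENNReal.ofReal (|w x| ^ q) ∂μ ≤ ∫⁻ x in B, ENNReal.ofReal (|η x * w x| ^ q) ∂μ := by
  have hU : MeasurableSet (η ⁻¹' {1}) := (isClosed_singleton.preimage hη).measurableSet
  calc ∫⁻ x in S, ENNReal.ofReal (|w x| ^ q) ∂μ
      ≤ ∫⁻ x in η ⁻¹' {1}, ENNReal.ofReal (|w x| ^ q) ∂μ := lintegral_mono_set hηS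
    _ = ∫⁻ x in η ⁻¹' {1}, ENNReal.ofReal (|η x * w x| ^ q) ∂μ :=
      setLIntegral_congr_fun hU fun x (hx : η x = 1) => by rw [hx, one_mul]
    _ ≤ ∫⁻ x, ENNReal.ofReal (|η x * w x| ^ q) ∂μ := setLIntegral_le_lintegral _ _
    _ = ∫⁻ x in B, ENNReal.ofReal (|η x * w x| ^ q) ∂μ := by
      refine (setLIntegral_eq_of_support_subset fun x hx => hηB fun hηx => hx ?_).symm
      simp [hηx, Real.zero_rpow hq]

theorem stmt15_general {n : ℕ} (Ω : Set (Fin n → ℝ)) (hΩ : IsOpen Ω)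
    (p σ : ℝ) (hp : 1 < p) (hσ : 1 < σ)
    (Q : (Fin n → ℝ) → Matrix (Fin n) (Fin n) ℝ)
    (hQmeas : ∀ i j : Fin n, Measurable fun x => Q x i j)
    (hQpsd : ∀ᵐ x ∂(volume.restrict Ω), (Q x).PosSemidef)
    (B S : Set (Fin n → ℝ)) (hBbdd : Bornology.IsBounded B)
    (hBΩ : B ⊆ Ω) (hBpos : 0 < volume B)
    (r : ℝ) (C₁ : ℝ)
    (sobolev : ∀ v : (Fin n → ℝ) → ℝ, (∃ K : NNReal, LipschitzWith K v) →
      tsupport v ⊆ B →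
      ((volume B)⁻¹ * ∫⁻ x in B, ENNReal.ofReal (|v x| ^ (p * σ))) ^ (1 / (p * σ)) ≤
        ENNReal.ofReal C₁ *
          (ENNReal.ofReal r *
              ((volume B)⁻¹ * ∫⁻ x in B, ENNReal.ofReal (sqQnormGrad Q v x ^ p)) ^ (1 / p) +
            ((volume B)⁻¹ * ∫⁻ x in B, ENNReal.ofReal (|v x| ^ p)) ^ (1 / p)))
    (t : ℝ) (ht : 1 < t)
    (η : (Fin n → ℝ) → ℝ) (hηlip : ∃ K : NNReal, LipschitzWith K η)
    (hηsupp : tsupport η ⊆ B)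
    (hη01 : ∀ x, 0 ≤ η x ∧ η x ≤ 1) (hηS : ∀ x ∈ S, η x = 1)
    (hηint : ∫⁻ x in B, ENNReal.ofReal (sqQnormGrad Q η x ^ (p * t)) < ⊤)
    (t' : ℝ) (ht' : t' = t / (t - 1)) (c₂ : ℝ)
    (embed : ∀ f : (Fin n → ℝ) → ℝ, LocLipschitzOn Ω f →
      (∫⁻ x in B, ENNReal.ofReal (|f x| ^ (p * t'))) ^ (1 / (p * t')) ≤
        ENNReal.ofReal c₂ *
          ((∫⁻ x in Ω, ENNReal.ofReal (sqQnormGrad Q f x ^ p)) +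
            ∫⁻ x in Ω, ENNReal.ofReal (|f x| ^ p)) ^ (1 / p)) :
    ∃ C : ℝ, 0 < C ∧ ∀ w : (Fin n → ℝ) → ℝ, LocLipschitzOn Ω w →
      (∫⁻ x in S, ENNReal.ofReal (|w x| ^ (p * σ))) ^ (1 / (p * σ)) ≤
        ENNReal.ofReal C *
          ((∫⁻ x in Ω, ENNReal.ofReal (sqQnormGrad Q w x ^ p)) +
            ∫⁻ x in Ω, ENNReal.ofReal (|w x| ^ p)) ^ (1 / p) := by
  have hp0 : 0 < p := by linarith
  have hconj : t'.HolderConjugate t := ht' ▸ (Real.HolderConjugate.conjExponent ht).symm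
  obtain ⟨Kη, hKη⟩ := hηlip
  have hη1 : ∀ x, |η x| ≤ 1 := fun x => abs_le.2 ⟨by linarith [(hη01 x).1], (hη01 x).2⟩
  have hηc : HasCompactSupport η :=
    Metric.isCompact_of_isClosed_isBounded (isClosed_tsupport η) (hBbdd.subset hηsupp)
  set A : ℝ≥0∞ := 2 ^ (p - 1) * (1 + ENNReal.ofReal c₂ ^ p *
    (∫⁻ x in B, ENNReal.ofReal (sqQnormGrad Q η x ^ (p * t))) ^ (1 / t))
  set C : ℝ≥0∞ := volume B ^ (1 / (p * σ)) * (ENNReal.ofReal C₁ *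
    (ENNReal.ofReal r * ((volume B)⁻¹ * A) ^ (1 / p) + (volume B)⁻¹ ^ (1 / p)))
  have hB : volume B ≠ ∞ := hBbdd.measure_lt_top.ne
  have hC : C ≠ ∞ := by
    have := hBpos.ne'
    have := hηint.ne
    finiteness
  refine ⟨C.toReal + 1, by positivity, fun w hw => ?_⟩
  set X := (∫⁻ x in Ω, ENNReal.ofReal (sqQnormGrad Q w x ^ p)) +
    ∫⁻ x in Ω, ENNReal.ofReal (|w x| ^ p)
  have hw' : LocallyLipschitzOn Ω w := fun x hx => hw x hx
  have hBΩ_ae : volume.restrict B ≤ volume.restrict Ω := Measure.restrict_mono hBΩ le_rfl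
  have hgrad : ∫⁻ x in B, ENNReal.ofReal (sqQnormGrad Q (fun y => η y * w y) x ^ p) ≤ A * X :=
    lintegral_sqQnormGrad_mul_rpow_le hQmeas (ae_mono hBΩ_ae hQpsd)
      (ae_restrict_of_ae hKη.ae_differentiableAt) (ae_mono hBΩ_ae (hw'.ae_differentiableAt hΩ))
      ((hw'.continuousOn.aemeasurable hΩ.measurableSet).mono_measure hBΩ_ae) hη1 hp.le hconj
      ((lintegral_mono_set hBΩ).trans le_self_add) (embed w hw)
  have hL : ∫⁻ x in B, ENNReal.ofReal (|η x * w x| ^ p) ≤ X :=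
    (lintegral_ofReal_abs_mul_rpow_le hη1 hp0.le).trans ((lintegral_mono_set hBΩ).trans le_add_self)
  obtain ⟨K, hK⟩ := hw'.mono (hηsupp.trans hBΩ) |>.exists_lipschitzWith_mul hKη hη1 hηc
  calc (∫⁻ x in S, ENNReal.ofReal (|w x| ^ (p * σ))) ^ (1 / (p * σ))
      ≤ (∫⁻ x in B, ENNReal.ofReal (|η x * w x| ^ (p * σ))) ^ (1 / (p * σ)) := by
        refine ENNReal.rpow_le_rpow ?_ (by positivity)
        exact setLIntegral_le_setLIntegral_mul_of_eq_one hKη.continuous hηS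
          ((subset_tsupport η).trans hηsupp) (by positivity)
    _ ≤ C * X ^ (1 / p) :=
      ENNReal.rpow_le_of_normalized_le (by positivity) (by positivity) hBpos.ne' hB
        (sobolev _ ⟨K, hK⟩ (tsupport_mul_subset_left.trans hηsupp))
        hgrad hL
    _ ≤ ENNReal.ofReal (C.toReal + 1) * X ^ (1 / p) := by
      gcongr
      exact ENNReal.le_ofReal_iff_toReal_le hC (by positivity) |>.2 (by linarith)

/-- Under a Sobolev inequality for compactly supported Lipschitz functions
on `B` (i), the existence of a cutoff `η` equal to `1` on `S ⊆ B` with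
`√Q ∇η ∈ L^{pt}(B)` (ii), and the embedding `(∫_B |f|^{pt'})^{1/(pt')} ≤ c₂‖f‖_{W^{1,p}_Q(Ω)}`
for locally Lipschitz `f` (iii), every locally Lipschitz `w` satisfies
`(∫_S |w|^{pσ})^{1/(pσ)} ≤ C‖w‖_{W^{1,p}_Q(Ω)}` with `C` independent of `w`. -/
theorem stmt15 {n : ℕ} (Ω : Set (Fin n → ℝ)) (hΩ : IsOpen Ω)
    (p σ : ℝ) (hp : 1 < p) (hσ : 1 < σ)
    (Q : (Fin n → ℝ) → Matrix (Fin n) (Fin n) ℝ)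
    (hQmeas : ∀ i j : Fin n, Measurable fun x => Q x i j)
    (hQpsd : ∀ᵐ x ∂(volume.restrict Ω), (Q x).PosSemidef)
    (B S : Set (Fin n → ℝ)) (hBmeas : MeasurableSet B) (hBbdd : Bornology.IsBounded B)
    (hBΩ : B ⊆ Ω) (hBpos : 0 < volume B) (hSB : S ⊆ B)
    (r : ℝ) (hr : 0 < r) (C₁ : ℝ) (hC₁ : 0 < C₁)
    (sobolev : ∀ v : (Fin n → ℝ) → ℝ, (∃ K : NNReal, LipschitzWith K v) →
      tsupport v ⊆ B →
      ((volume B)⁻¹ * ∫⁻ x in B, ENNReal.ofReal (|v x| ^ (p * σ))) ^ (1 / (p * σ)) ≤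
        ENNReal.ofReal C₁ *
          (ENNReal.ofReal r *
              ((volume B)⁻¹ * ∫⁻ x in B, ENNReal.ofReal (sqQnormGrad Q v x ^ p)) ^ (1 / p) +
            ((volume B)⁻¹ * ∫⁻ x in B, ENNReal.ofReal (|v x| ^ p)) ^ (1 / p)))
    (t : ℝ) (ht : 1 < t)
    (η : (Fin n → ℝ) → ℝ) (hηlip : ∃ K : NNReal, LipschitzWith K η)
    (hηsupp : tsupport η ⊆ B)
    (hη01 : ∀ x, 0 ≤ η x ∧ η x ≤ 1) (hηS : ∀ x ∈ S, η x = 1)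
    (hηint : ∫⁻ x in B, ENNReal.ofReal (sqQnormGrad Q η x ^ (p * t)) < ⊤)
    (t' : ℝ) (ht' : t' = t / (t - 1)) (c₂ : ℝ) (hc₂ : 0 < c₂)
    (embed : ∀ f : (Fin n → ℝ) → ℝ, LocLipschitzOn Ω f →
      (∫⁻ x in B, ENNReal.ofReal (|f x| ^ (p * t'))) ^ (1 / (p * t')) ≤
        ENNReal.ofReal c₂ *
          ((∫⁻ x in Ω, ENNReal.ofReal (sqQnormGrad Q f x ^ p)) +
            ∫⁻ x in Ω, ENNReal.ofReal (|f x| ^ p)) ^ (1 / p)) :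
    ∃ C : ℝ, 0 < C ∧ ∀ w : (Fin n → ℝ) → ℝ, LocLipschitzOn Ω w →
      (∫⁻ x in S, ENNReal.ofReal (|w x| ^ (p * σ))) ^ (1 / (p * σ)) ≤
        ENNReal.ofReal C *
          ((∫⁻ x in Ω, ENNReal.ofReal (sqQnormGrad Q w x ^ p)) +
            ∫⁻ x in Ω, ENNReal.ofReal (|w x| ^ p)) ^ (1 / p) :=
  stmt15_general Ω hΩ p σ hp hσ Q hQmeas hQpsd B S hBbdd hBΩ hBpos r C₁ sobolev t ht η hηlip hηsupp
    hη01 hηS hηint t' ht' c₂ embed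
end
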